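/- For the polymer representation of the BEG model, the pair potential W(p,p̃) = -β Σ_{x∈p, y∈p̃}[J_{xy}s_x s_y + K_{xy}] for d(p,p̃) ≥ 2 (and +∞ otherwise) is stable with B(p) = βJ|p| - A(p): for all n and all polymers (p₁,...,pₙ), Σ_{1≤i<j≤n} W(pᵢ,pⱼ) ≥ -Σ_{i=1}^n (βJ|pᵢ| - A(pᵢ)), where J = (1/2) sup_x Σ_{y≠x}(J_{xy}+|K_{xy}|) and A(p) = β Σ_{{x,y}⊆p}[J_{xy}s_x s_y + K_{xy}]. -/

import Mathlib

open scoped BigOperators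
noncomputable section

/-- The ℓ¹ (nearest-neighbor graph) distance on `ℤ^d`. -/
def dist1 {d : ℕ} (x y : Fin d → ℤ) : ℕ := ∑ i, (x i - y i).natAbs

/-- A polymer of the BEG model: a finite nonempty connected subset of `ℤ^d` together
with a spin assignment taking values `±1` on it. -/
structure Polymer (d : ℕ) where
  supp : Finset (Fin d → ℤ)
  spin : (Fin d → ℤ) → ℤ
  nonempty : supp.Nonempty
  connected : ∀ A B : Finset (Fin d → ℤ), A ∪ B = supp → Disjoint A B →
    A.Nonempty → B.Nonempty → ∃ x ∈ A, ∃ y ∈ B, dist1 x y = 1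
  spin_pm : ∀ x ∈ supp, spin x = 1 ∨ spin x = -1

/-- The polymer pair interaction
`W(p,p̃) = -β Σ_{x∈p, y∈p̃} [J_{xy} s_x s_y + K_{xy}]` if `d(p,p̃) ≥ 2`, and `+∞` otherwise. -/
noncomputable def Wpair {d : ℕ} (β : ℝ) (Jm Km : (Fin d → ℤ) → (Fin d → ℤ) → ℝ)
    (p q : Polymer d) : EReal :=
  if ∃ x ∈ p.supp, ∃ y ∈ q.supp, dist1 x y ≤ 1 then ⊤
  else ((-β * ∑ x ∈ p.supp, ∑ y ∈ q.supp,
    (Jm x y * p.spin x * q.spin y + Km x y) : ℝ) : EReal)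

/-- The self-energy `A(p) = β Σ_{{x,y}⊆p} [J_{xy} s_x s_y + K_{xy}]`. -/
noncomputable def Apoly {d : ℕ} (β : ℝ) (Jm Km : (Fin d → ℤ) → (Fin d → ℤ) → ℝ)
    (p : Polymer d) : ℝ :=
  (β / 2) * ∑ x ∈ p.supp, ∑ y ∈ p.supp,
    if y = x then 0 else (Jm x y * p.spin x * p.spin y + Km x y)

/-! If two of the polymers are at distance at most one, the sum of the `W`'s is `+∞`. Otherwise
their supports are pairwise disjoint and all `W`'s are real. Bounding each term
`J_{xy} s_x s_y + K_{xy}` by `g(x,y) = J_{xy} + |K_{xy}|`, the claim reduces to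
`2 Σ_{i<j} Σ_{x∈pᵢ, y∈pⱼ} g(x,y) + Σᵢ Σ_{x≠y ∈ pᵢ} g(x,y) ≤ 2J Σᵢ |pᵢ|`. Since `g` is symmetric,
the left side is `Σ_{x∈U} Σ_{y∈U∖{x}} g(x,y)` for `U` the disjoint union of the supports, and
each row sum is at most `2J`. -/

open Finset Function

lemma EReal.coe_finset_sum {α : Type*} (s : Finset α) (f : α → ℝ) :
    ((∑ a ∈ s, f a : ℝ) : EReal) = ∑ a ∈ s, (f a : EReal) :=
  map_sum (⟨⟨Real.toEReal, EReal.coe_zero⟩, EReal.coe_add⟩ : ℝ →+ EReal) f s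

lemma EReal.sum_eq_top_of_mem {α : Type*} {s : Finset α} {f : α → EReal}
    (hbot : ∀ a ∈ s, f a ≠ ⊥) {a : α} (ha : a ∈ s) (htop : f a = ⊤) :
    ∑ b ∈ s, f b = ⊤ := by
  classical
  rw [← add_sum_erase s f ha, htop, EReal.top_add_of_ne_bot]
  exact sum_induction f (· ≠ ⊥) (fun _ _ hx hy => EReal.add_ne_bot_iff.2 ⟨hx, hy⟩)
    EReal.zero_ne_bot fun b hb => hbot b (mem_of_mem_erase hb)

theorem two_nsmul_sum_filter_lt {ι M : Type*} [Fintype ι] [LinearOrder ι] [AddCommMonoid M]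
    (f : ι → ι → M) (hf : ∀ i j, f i j = f j i) :
    2 • ∑ pr ∈ univ.filter (fun pr : ι × ι => pr.1 < pr.2), f pr.1 pr.2 =
      ∑ i, ∑ j ∈ univ.erase i, f i j := by
  have hlt : ∑ pr ∈ univ.filter (fun pr : ι × ι => pr.1 < pr.2), f pr.1 pr.2 =
      ∑ i, ∑ j, if i < j then f i j else 0 := by
    rw [sum_filter, Fintype.sum_prod_type]
  have hgt : ∑ i, ∑ j, (if i < j then f i j else 0) =
      ∑ i, ∑ j, if j < i then f i j else 0 := by
    rw [sum_comm]
    exact sum_congr rfl fun i _ => sum_congr rfl fun j _ => by rw [hf]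
  have hne : ∀ i, ∑ j ∈ univ.erase i, f i j =
      ∑ j, ((if i < j then f i j else 0) + if j < i then f i j else 0) := by
    intro i
    rw [← filter_ne' univ i, sum_filter]
    refine sum_congr rfl fun j _ => ?_
    rcases lt_trichotomy i j with h | rfl | h
    · simp [h, h.ne', h.not_gt]
    · simp
    · simp [h, h.ne, h.not_gt]
  simp only [hne, sum_add_distrib, two_nsmul, hlt, hgt]

theorem sum_sum_erase_add_sum_erase_le {ι α : Type*} [Fintype ι] [DecidableEq ι]
    [DecidableEq α] {s : ι → Finset α} (hs : Pairwise (Disjoint on s)) {g : α → α → ℝ} {c : ℝ}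
    (hc : ∀ x T, x ∉ T → ∑ y ∈ T, g x y ≤ c) {i : ι} {x : α} (hx : x ∈ s i) :
    ∑ j ∈ univ.erase i, ∑ y ∈ s j, g x y + ∑ y ∈ (s i).erase x, g x y ≤ c := by
  have hmem : x ∈ univ.biUnion s := mem_biUnion.2 ⟨i, mem_univ i, hx⟩
  have h := hc x _ (notMem_erase x (univ.biUnion s))
  rw [sum_erase_eq_sub hmem, sum_biUnion (hs.set_pairwise _),
    ← add_sum_erase _ _ (mem_univ i)] at h
  rw [sum_erase_eq_sub hx]
  linarith

theorem two_mul_sum_pairs_add_sum_self_le {ι α : Type*} [Fintype ι] [LinearOrder ι]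
    [DecidableEq α] {s : ι → Finset α} (hs : Pairwise (Disjoint on s)) {g : α → α → ℝ}
    (hg : ∀ x y, g x y = g y x) {c : ℝ} (hc : ∀ x T, x ∉ T → ∑ y ∈ T, g x y ≤ c) :
    2 * ∑ pr ∈ univ.filter (fun pr : ι × ι => pr.1 < pr.2),
        ∑ x ∈ s pr.1, ∑ y ∈ s pr.2, g x y +
      ∑ i, ∑ x ∈ s i, ∑ y ∈ (s i).erase x, g x y ≤
      c * ∑ i, ((s i).card : ℝ) := by
  have hsymm : ∀ i j, ∑ x ∈ s i, ∑ y ∈ s j, g x y = ∑ x ∈ s j, ∑ y ∈ s i, g x y :=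
    fun i j => by rw [sum_comm]; simp only [hg]
  rw [two_mul, ← two_nsmul, two_nsmul_sum_filter_lt _ hsymm, ← sum_add_distrib, mul_sum]
  refine sum_le_sum fun i _ => ?_
  rw [sum_comm, ← sum_add_distrib]
  refine (sum_le_sum fun x hx => ?_).trans_eq (by rw [sum_const, nsmul_eq_mul, mul_comm])
  exact sum_sum_erase_add_sum_erase_le hs hc hx

namespace Polymer

variable {d : ℕ} {Jm Km : (Fin d → ℤ) → (Fin d → ℤ) → ℝ}

lemma abs_spin {p : Polymer d} {x : Fin d → ℤ} (hx : x ∈ p.supp) : |(p.spin x : ℝ)| = 1 := by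
  rcases p.spin_pm x hx with h | h <;> simp [h]

lemma interaction_le (hJpos : ∀ x y, 0 ≤ Jm x y) {p q : Polymer d} {x y : Fin d → ℤ}
    (hx : x ∈ p.supp) (hy : y ∈ q.supp) :
    Jm x y * p.spin x * q.spin y + Km x y ≤ Jm x y + |Km x y| := by
  have hJ : Jm x y * p.spin x * q.spin y ≤ Jm x y :=
    calc _ ≤ |Jm x y * p.spin x * q.spin y| := le_abs_self _
      _ = Jm x y := by rw [abs_mul, abs_mul, abs_spin hx, abs_spin hy, abs_of_nonneg (hJpos x y),
          mul_one, mul_one]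
  linarith [le_abs_self (Km x y)]

def pairEnergy (Jm Km : (Fin d → ℤ) → (Fin d → ℤ) → ℝ) (p q : Polymer d) : ℝ :=
  ∑ x ∈ p.supp, ∑ y ∈ q.supp, (Jm x y * p.spin x * q.spin y + Km x y)

lemma pairEnergy_le (hJpos : ∀ x y, 0 ≤ Jm x y) (p q : Polymer d) :
    pairEnergy Jm Km p q ≤ ∑ x ∈ p.supp, ∑ y ∈ q.supp, (Jm x y + |Km x y|) :=
  sum_le_sum fun _ hx => sum_le_sum fun _ hy => interaction_le hJpos hx hy

lemma Apoly_le {β : ℝ} (hβ : 0 ≤ β) (hJpos : ∀ x y, 0 ≤ Jm x y) (p : Polymer d) :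
    Apoly β Jm Km p ≤ β / 2 * ∑ x ∈ p.supp, ∑ y ∈ p.supp.erase x, (Jm x y + |Km x y|) := by
  unfold Apoly
  gcongr with x hx
  rw [← filter_ne', sum_filter]
  refine sum_le_sum fun y hy => ?_
  by_cases hxy : y = x
  · simp [hxy]
  · simpa [hxy] using interaction_le hJpos hx hy

lemma Wpair_of_close {β : ℝ} {p q : Polymer d}
    (h : ∃ x ∈ p.supp, ∃ y ∈ q.supp, dist1 x y ≤ 1) : Wpair β Jm Km p q = ⊤ :=
  if_pos h

lemma Wpair_of_not_close {β : ℝ} {p q : Polymer d}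
    (h : ¬ ∃ x ∈ p.supp, ∃ y ∈ q.supp, dist1 x y ≤ 1) :
    Wpair β Jm Km p q = ((-β * pairEnergy Jm Km p q : ℝ) : EReal) :=
  if_neg h

lemma Wpair_ne_bot (β : ℝ) (p q : Polymer d) : Wpair β Jm Km p q ≠ ⊥ := by
  unfold Wpair
  split_ifs
  · exact top_ne_bot
  · exact EReal.coe_ne_bot _

lemma disjoint_supp_of_not_close {p q : Polymer d}
    (h : ¬ ∃ x ∈ p.supp, ∃ y ∈ q.supp, dist1 x y ≤ 1) : Disjoint p.supp q.supp :=
  disjoint_left.2 fun x hp hq => h ⟨x, hp, x, hq, by simp [dist1]⟩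

theorem neg_sum_le_sum_pairEnergy_of_pairwise_disjoint {ι : Type*} [Fintype ι] [LinearOrder ι]
    {β : ℝ} (hβ : 0 ≤ β) (hJpos : ∀ x y, 0 ≤ Jm x y)
    (hJsym : ∀ x y, Jm x y = Jm y x) (hKsym : ∀ x y, Km x y = Km y x) {J : ℝ}
    (hJ : ∀ (x : Fin d → ℤ) (T : Finset (Fin d → ℤ)), x ∉ T →
      ∑ y ∈ T, (Jm x y + |Km x y|) ≤ 2 * J)
    (p : ι → Polymer d) (hdisj : Pairwise (Disjoint on fun i => (p i).supp)) :
    -∑ i, (β * J * ((p i).supp.card : ℝ) - Apoly β Jm Km (p i)) ≤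
      ∑ pr ∈ univ.filter (fun pr : ι × ι => pr.1 < pr.2),
        -β * pairEnergy Jm Km (p pr.1) (p pr.2) := by
  have hpairs := sum_le_sum fun (pr : ι × ι) (_ : pr ∈ univ.filter (fun pr => pr.1 < pr.2)) =>
    pairEnergy_le (Km := Km) hJpos (p pr.1) (p pr.2)
  have hself := sum_le_sum fun i (_ : i ∈ univ) => Apoly_le (Km := Km) hβ hJpos (p i)
  have hcount := two_mul_sum_pairs_add_sum_self_le hdisj
    (fun x y => by rw [hJsym, hKsym]) hJ
  rw [← mul_sum] at hself
  rw [← mul_sum, sum_sub_distrib, ← mul_sum]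
  linarith [mul_le_mul_of_nonneg_left hpairs hβ, mul_le_mul_of_nonneg_left hcount hβ]

end Polymer

theorem stmt11_general (d : ℕ) (β : ℝ) (hβ : 0 < β)
    (Jm Km : (Fin d → ℤ) → (Fin d → ℤ) → ℝ)
    (hJpos : ∀ x y, 0 ≤ Jm x y)
    (hJsym : ∀ x y, Jm x y = Jm y x) (hKsym : ∀ x y, Km x y = Km y x)
    (J : ℝ)
    (hJ : ∀ (x : Fin d → ℤ) (T : Finset (Fin d → ℤ)), x ∉ T →
      ∑ y ∈ T, (Jm x y + |Km x y|) ≤ 2 * J)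
    (n : ℕ) (p : Fin n → Polymer d) :
    -(∑ i, ((β * J * ((p i).supp.card : ℝ) - Apoly β Jm Km (p i) : ℝ) : EReal)) ≤
      ∑ pr ∈ Finset.univ.filter (fun pr : Fin n × Fin n => pr.1 < pr.2),
        Wpair β Jm Km (p pr.1) (p pr.2) := by
  by_cases hclose : ∃ pr ∈ univ.filter (fun pr : Fin n × Fin n => pr.1 < pr.2),
      ∃ x ∈ (p pr.1).supp, ∃ y ∈ (p pr.2).supp, dist1 x y ≤ 1
  · obtain ⟨pr, hpr, hxy⟩ := hclose
    rw [EReal.sum_eq_top_of_mem (f := fun pr => Wpair β Jm Km (p pr.1) (p pr.2))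
      (fun _ _ => Polymer.Wpair_ne_bot β _ _) hpr (Polymer.Wpair_of_close hxy)]
    exact le_top
  have hfar : ∀ i j, i < j → ¬ ∃ x ∈ (p i).supp, ∃ y ∈ (p j).supp, dist1 x y ≤ 1 :=
    fun i j hij h => hclose ⟨(i, j), by simpa using hij, h⟩
  have hdisj : Pairwise (Disjoint on fun i => (p i).supp) := fun i j hij =>
    hij.lt_or_gt.elim (fun h => Polymer.disjoint_supp_of_not_close (hfar i j h))
      (fun h => (Polymer.disjoint_supp_of_not_close (hfar j i h)).symm)
  rw [sum_congr rfl fun pr hpr =>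
      Polymer.Wpair_of_not_close (hfar pr.1 pr.2 (mem_filter.1 hpr).2),
    ← EReal.coe_finset_sum, ← EReal.coe_finset_sum, ← EReal.coe_neg, EReal.coe_le_coe_iff]
  exact Polymer.neg_sum_le_sum_pairEnergy_of_pairwise_disjoint hβ.le hJpos hJsym hKsym hJ p hdisj

/-- the BEG polymer interaction `W` is stable with `B(p) = βJ|p| - A(p)`:
for all `n` and all polymers `(p₁,…,pₙ)`,
`Σ_{1≤i<j≤n} W(pᵢ,pⱼ) ≥ -Σᵢ (βJ|pᵢ| - A(pᵢ))`, where
`J = (1/2) sup_x Σ_{y≠x} (J_{xy} + |K_{xy}|)`. -/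
theorem stmt11 (d : ℕ) (hd : 1 ≤ d) (β : ℝ) (hβ : 0 < β)
    (Jm Km : (Fin d → ℤ) → (Fin d → ℤ) → ℝ)
    (hJpos : ∀ x y, 0 ≤ Jm x y)
    (hJsym : ∀ x y, Jm x y = Jm y x) (hKsym : ∀ x y, Km x y = Km y x)
    (J : ℝ)
    (hJ : ∀ (x : Fin d → ℤ) (T : Finset (Fin d → ℤ)), x ∉ T →
      ∑ y ∈ T, (Jm x y + |Km x y|) ≤ 2 * J)
    (n : ℕ) (p : Fin n → Polymer d) :
    -(∑ i, ((β * J * ((p i).supp.card : ℝ) - Apoly β Jm Km (p i) : ℝ) : EReal)) ≤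
      ∑ pr ∈ Finset.univ.filter (fun pr : Fin n × Fin n => pr.1 < pr.2),
        Wpair β Jm Km (p pr.1) (p pr.2) :=
  stmt11_general d β hβ Jm Km hJpos hJsym hKsym J hJ n p
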